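/- Let T be a finite combinatorial tree, α ∈ [1/2, 1), and {i,j} an edge. Then W₁(m_i^α, m_j^α) = 1 + (1−α)·( (deg(i)−2)/deg(i) + (deg(j)−2)/deg(j) ), where m_x^α is the α-lazy random walk measure at x. -/

import Mathlib

/-!
The upper bound comes from an explicit transport plan: the mass `1 - α` that `m_j` spreads over
the neighbours of `j` is moved to `i`, and the mass `α` sitting at `j` supplies the rest of `m_i`
(at `i` this leaves `2α - 1 ≥ 0`). The lower bound is weak Kantorovich duality with the potentials
`d(·, j)` on the support of `m_i` and `1 - d(·, i)` on that of `m_j`: their difference is bounded by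
`d` because in a tree a neighbour of `j` other than `i` and a neighbour of `i` other than `j` are at
distance exactly 3. Plan and potentials both have value `∑ m_i d(·, j) + ∑ m_j d(·, i) - 1`, which
is computed from the fact that the neighbours of `i` other than `j` lie at distance 2 from `j`.
-/

/-- 1-Wasserstein distance on a graph w.r.t. the shortest path metric. -/
noncomputable def W1 {V : Type*} [Fintype V] (G : SimpleGraph V) (μ ν : V → ℝ) : ℝ :=
  sInf { c : ℝ | ∃ π : V → V → ℝ, (∀ i j, 0 ≤ π i j) ∧
    (∀ j, ∑ i, π i j = μ j) ∧ (∀ i, ∑ j, π i j = ν i) ∧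
    c = ∑ i, ∑ j, π i j * (G.dist i j : ℝ) }

/-- The α-lazy random walk measure at `x`. -/
noncomputable def lazy {V : Type*} [Fintype V] [DecidableEq V] (G : SimpleGraph V)
    [DecidableRel G.Adj] (α : ℝ) (x : V) : V → ℝ :=
  fun y => if y = x then α else if G.Adj x y then (1 - α) / (G.degree x : ℝ) else 0

open Finset SimpleGraph

namespace SimpleGraph

variable {V : Type*} {G : SimpleGraph V} {u v w x : V}

lemma IsAcyclic.dist_eq_length_of_isPath (hG : G.IsAcyclic) {p : G.Walk u v} (hp : p.IsPath) :
    G.dist u v = p.length := by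
  obtain ⟨q, hq, hq_len⟩ := p.reachable.exists_path_of_dist
  have : (⟨p, hp⟩ : G.Path u v) = ⟨q, hq⟩ := (hG.subsingleton_path u v).elim _ _
  rw [← hq_len, show p = q from congrArg Subtype.val this]

lemma IsAcyclic.dist_eq_two (hG : G.IsAcyclic) (huv : G.Adj u v) (hvw : G.Adj v w)
    (huw : u ≠ w) : G.dist u w = 2 := by
  refine hG.dist_eq_length_of_isPath (p := .cons huv (.cons hvw .nil)) ?_
  simp [huv.ne, hvw.ne, huw]

lemma IsAcyclic.dist_eq_three (hG : G.IsAcyclic) (huv : G.Adj u v) (hvw : G.Adj v w)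
    (hwx : G.Adj w x) (huw : u ≠ w) (hvx : v ≠ x) : G.dist u x = 3 := by
  have hux : u ≠ x := by
    rintro rfl
    have := hG.dist_eq_two hvw hwx hvx
    rw [dist_eq_one_iff_adj.mpr huv.symm] at this
    omega
  refine hG.dist_eq_length_of_isPath (p := .cons huv (.cons hvw (.cons hwx .nil))) ?_
  simp [huv.ne, hvw.ne, hwx.ne, huw, hvx, hux]

lemma IsTree.dist_add_dist_le {i j a b : V} (hG : G.IsTree) (hij : G.Adj i j)
    (ha : a = j ∨ G.Adj j a) (hb : b = i ∨ G.Adj i b) :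
    G.dist b j + G.dist a i ≤ G.dist a b + 1 := by
  have hij' : G.dist i j = 1 := dist_eq_one_iff_adj.mpr hij
  have hji : G.dist j i = 1 := dist_eq_one_iff_adj.mpr hij.symm
  rcases ha with rfl | ha
  · rw [dist_comm (u := b), hji]
  rcases hb with rfl | hb
  · rw [hij', add_comm]
  by_cases hai : a = i
  · have := hG.connected.dist_triangle (u := b) (v := i) (w := j)
    rw [hai, dist_self, dist_comm (u := i)]
    omega
  by_cases hbj : b = j
  · have := hG.connected.dist_triangle (u := a) (v := j) (w := i)
    rw [hbj, dist_self]
    omega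
  rw [hG.isAcyclic.dist_eq_two hb.symm hij hbj,
    hG.isAcyclic.dist_eq_two ha.symm hij.symm hai,
    hG.isAcyclic.dist_eq_three ha.symm hij.symm hb hai (Ne.symm hbj)]

lemma IsTree.sum_dist_neighborFinset_add_two {i j : V} [Fintype (G.neighborSet i)] (hG : G.IsTree)
    (hij : G.Adj i j) : ∑ b ∈ G.neighborFinset i, G.dist b j + 2 = 2 * G.degree i := by
  classical
  have hj : j ∈ G.neighborFinset i := (mem_neighborFinset G i j).mpr hij
  have htwo : ∀ b ∈ (G.neighborFinset i).erase j, G.dist b j = 2 := fun b hb =>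
    hG.isAcyclic.dist_eq_two ((mem_neighborFinset G i b).mp (mem_of_mem_erase hb)).symm hij
      (ne_of_mem_erase hb)
  rw [← add_sum_erase _ _ hj, dist_self, sum_congr rfl htwo, sum_const, card_erase_of_mem hj,
    card_neighborFinset_eq_degree, smul_eq_mul]
  have : 0 < G.degree i := G.degree_pos_iff_exists_adj i |>.mpr ⟨j, hij⟩
  omega

end SimpleGraph

section Transport

variable {α β : Type*} [Fintype α] [Fintype β]

theorem sum_mul_sub_sum_mul_le_of_coupling {μ : β → ℝ} {ν : α → ℝ} {π : α → β → ℝ}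
    (hπ : ∀ a b, 0 ≤ π a b) (hμ : ∀ b, ∑ a, π a b = μ b) (hν : ∀ a, ∑ b, π a b = ν a)
    {φ : β → ℝ} {ψ : α → ℝ} {c : α → β → ℝ}
    (hφψ : ∀ a b, ν a ≠ 0 → μ b ≠ 0 → φ b - ψ a ≤ c a b) :
    ∑ b, μ b * φ b - ∑ a, ν a * ψ a ≤ ∑ a, ∑ b, π a b * c a b := by
  have hsplit : ∑ b, μ b * φ b - ∑ a, ν a * ψ a = ∑ a, ∑ b, π a b * (φ b - ψ a) := by
    simp only [mul_sub, sum_sub_distrib, ← hμ, ← hν, sum_mul]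
    rw [sum_comm]
  rw [hsplit]
  refine sum_le_sum fun a _ => sum_le_sum fun b _ => ?_
  rcases (hπ a b).eq_or_lt with h | h
  · simp [← h]
  · refine mul_le_mul_of_nonneg_left (hφψ a b ?_ ?_) h.le
    · exact (h.trans_le (hν a ▸ single_le_sum (fun b _ => hπ a b) (mem_univ b))).ne'
    · exact (h.trans_le (hμ b ▸ single_le_sum (fun a _ => hπ a b) (mem_univ a))).ne'

end Transport

theorem W1_eq_of_coupling {V : Type*} [Fintype V] {G : SimpleGraph V} {μ ν : V → ℝ}
    {π : V → V → ℝ} (hπ : ∀ a b, 0 ≤ π a b) (hμ : ∀ b, ∑ a, π a b = μ b)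
    (hν : ∀ a, ∑ b, π a b = ν a) {φ ψ : V → ℝ}
    (hφψ : ∀ a b, ν a ≠ 0 → μ b ≠ 0 → φ b - ψ a ≤ G.dist a b)
    (hcost : ∑ a, ∑ b, π a b * (G.dist a b : ℝ) = ∑ b, μ b * φ b - ∑ a, ν a * ψ a) :
    W1 G μ ν = ∑ b, μ b * φ b - ∑ a, ν a * ψ a := by
  have hlower : ∀ c ∈ { c : ℝ | ∃ π : V → V → ℝ, (∀ i j, 0 ≤ π i j) ∧
      (∀ j, ∑ i, π i j = μ j) ∧ (∀ i, ∑ j, π i j = ν i) ∧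
      c = ∑ i, ∑ j, π i j * (G.dist i j : ℝ) }, ∑ b, μ b * φ b - ∑ a, ν a * ψ a ≤ c := by
    rintro c ⟨p, hp, hpμ, hpν, rfl⟩
    exact sum_mul_sub_sum_mul_le_of_coupling hp hpμ hpν hφψ
  exact le_antisymm (csInf_le ⟨_, hlower⟩ ⟨π, hπ, hμ, hν, hcost.symm⟩)
    (le_csInf ⟨_, π, hπ, hμ, hν, hcost.symm⟩ hlower)

section LazyWalk

variable {V : Type*} [Fintype V] [DecidableEq V] {G : SimpleGraph V} [DecidableRel G.Adj]
  {α : ℝ} {x y : V}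

lemma eq_or_adj_of_lazy_ne_zero (h : lazy G α x y ≠ 0) : y = x ∨ G.Adj x y := by
  unfold lazy at h
  split_ifs at h <;> tauto

lemma lazy_nonneg (h₀ : 0 ≤ α) (h₁ : α ≤ 1) : 0 ≤ lazy G α x y := by
  unfold lazy
  split_ifs <;> positivity

@[simp]
lemma lazy_self : lazy G α x x = α := if_pos rfl

lemma sum_lazy_mul (g : V → ℝ) :
    ∑ y, lazy G α x y * g y = α * g x + (1 - α) / G.degree x * ∑ y ∈ G.neighborFinset x, g y := by
  have hsplit : ∀ y, lazy G α x y * g y =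
      (if y = x then α * g y else 0) + (if G.Adj x y then (1 - α) / G.degree x * g y else 0) := by
    intro y
    unfold lazy
    by_cases hy : y = x <;> simp [hy]
  simp only [hsplit, sum_add_distrib, sum_ite_eq', mem_univ, if_true, ← sum_filter, mul_sum,
    neighborFinset_eq_filter]

lemma sum_lazy (hx : G.degree x ≠ 0) : ∑ y, lazy G α x y = 1 := by
  simpa [card_neighborFinset_eq_degree, hx] using sum_lazy_mul (G := G) (α := α) (x := x) 1

end LazyWalk

section EdgeCoupling

variable {V : Type*} [Fintype V] [DecidableEq V] (G : SimpleGraph V) [DecidableRel G.Adj]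
  (α : ℝ) (i j : V)

/-- Rows `a` carry `lazy G α j`, columns `b` carry `lazy G α i`, as in `W1`. -/
noncomputable def lazyEdgeCoupling (a b : V) : ℝ :=
  (if b = i then lazy G α j a - (if a = j then α else 0) else 0) +
    (if a = j then lazy G α i b - (if b = i then 1 - α else 0) else 0)

variable {G α i j}

lemma lazyEdgeCoupling_nonneg (h₁ : 1 / 2 ≤ α) (h₂ : α ≤ 1) (a b : V) :
    0 ≤ lazyEdgeCoupling G α i j a b := by
  have hlazy := fun x y => lazy_nonneg (G := G) (x := x) (y := y) (by linarith) h₂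
  unfold lazyEdgeCoupling
  by_cases ha : a = j <;> by_cases hb : b = i
  · simp only [ha, hb, if_true, lazy_self]
    linarith
  · simpa [ha, hb] using hlazy i b
  · simpa [ha, hb] using hlazy j a
  · simp [ha, hb]

lemma sum_lazyEdgeCoupling_left (hj : G.degree j ≠ 0) (b : V) :
    ∑ a, lazyEdgeCoupling G α i j a b = lazy G α i b := by
  unfold lazyEdgeCoupling
  by_cases hb : b = i
  · simp [hb, sum_add_distrib, sum_sub_distrib, sum_lazy hj]
  · simp [hb]

lemma sum_lazyEdgeCoupling_right (hi : G.degree i ≠ 0) (a : V) :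
    ∑ b, lazyEdgeCoupling G α i j a b = lazy G α j a := by
  unfold lazyEdgeCoupling
  by_cases ha : a = j
  · simp [ha, sum_sub_distrib, sum_lazy hi]
  · simp [ha]

lemma sum_sum_lazyEdgeCoupling_mul (c : V → V → ℝ) :
    ∑ a, ∑ b, lazyEdgeCoupling G α i j a b * c a b =
      ∑ a, lazy G α j a * c a i + ∑ b, lazy G α i b * c j b - c j i := by
  simp only [lazyEdgeCoupling, add_mul, sub_mul, ite_mul, zero_mul, one_mul, sum_add_distrib,
    sum_sub_distrib, sum_ite_irrel, sum_ite_eq', mem_univ, if_true, sum_const_zero]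
  ring

end EdgeCoupling

theorem stmt_10 {V : Type*} [Fintype V] [DecidableEq V] (G : SimpleGraph V)
    [DecidableRel G.Adj] (hT : G.IsTree) (α : ℝ) (hα : α ∈ Set.Ico (1/2 : ℝ) 1)
    (i j : V) (hadj : G.Adj i j) :
    W1 G (lazy G α i) (lazy G α j) =
      1 + (1 - α) *
        (((G.degree i : ℝ) - 2) / (G.degree i : ℝ) +
         ((G.degree j : ℝ) - 2) / (G.degree j : ℝ)) := by
  have hi : G.degree i ≠ 0 := (G.degree_pos_iff_exists_adj i |>.mpr ⟨j, hadj⟩).ne'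
  have hj : G.degree j ≠ 0 := (G.degree_pos_iff_exists_adj j |>.mpr ⟨i, hadj.symm⟩).ne'
  have hij : (G.dist i j : ℝ) = 1 := by exact_mod_cast dist_eq_one_iff_adj.mpr hadj
  have hsi : (∑ b ∈ G.neighborFinset i, (G.dist b j : ℝ)) + 2 = 2 * G.degree i := by
    exact_mod_cast hT.sum_dist_neighborFinset_add_two hadj
  have hsj : (∑ a ∈ G.neighborFinset j, (G.dist a i : ℝ)) + 2 = 2 * G.degree j := by
    exact_mod_cast hT.sum_dist_neighborFinset_add_two hadj.symm
  rw [W1_eq_of_coupling (lazyEdgeCoupling_nonneg hα.1 hα.2.le)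
    (sum_lazyEdgeCoupling_left hj) (sum_lazyEdgeCoupling_right hi)
    (φ := fun b => G.dist b j) (ψ := fun a => 1 - G.dist a i) ?_ ?_]
  · simp only [mul_sub, mul_one, sum_sub_distrib, sum_lazy hj, sum_lazy_mul,
      dist_comm (u := j) (v := i), hij]
    field_simp
    linear_combination (1 - α) * (G.degree j * hsi + G.degree i * hsj)
  · intro a b ha hb
    have := hT.dist_add_dist_le hadj (eq_or_adj_of_lazy_ne_zero ha) (eq_or_adj_of_lazy_ne_zero hb)
    have : (G.dist b j : ℝ) + G.dist a i ≤ G.dist a b + 1 := by exact_mod_cast this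
    linarith
  · simp only [sum_sum_lazyEdgeCoupling_mul, mul_sub, mul_one, sum_sub_distrib, sum_lazy hj, dist_comm (u := j), hij]
    ring
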